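/- arXiv:1510.04265 — 5 statements merged into one kernel-verified Lean document; each statement's English description precedes it below -/
import Mathlib

section
/- Let M and N be finite-dimensional smooth real manifolds without boundary, Hausdorff and second countable (hence σ-compact). Then the functions on M × N of split form are cofinal in C^∞(M × N) for the pointwise order: for every smooth function f : M × N → ℝ there exist smooth functions f₁ : M → ℝ and f₂ : N → ℝ such that f(x, y) ≤ f₁(x) + f₂(y) for all (x, y) ∈ M × N. -/
/-!
Exhaust `M` and `N` by compact sets `K i` and `L i`, and let `d i ≥ 0` bound `f` on `K i × L i`.
If `x` first enters at stage `i` and `y` at stage `j`, then `(x, y) ∈ K (max i j) × L (max i j)`,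
so `f (x, y) ≤ d (max i j) ≤ d i + d j`. The functions `x ↦ d i` and `y ↦ d j` are locally bounded,
and a smooth partition of unity turns a locally bounded function into a smooth function above it.
-/

open scoped ContDiff Manifold Topology
open Filter Set

namespace CompactExhaustion

variable {X Y : Type*} [TopologicalSpace X] [TopologicalSpace Y]

theorem eventually_find_le_succ (K : CompactExhaustion X) (x : X) :
    ∀ᶠ y in 𝓝 x, K.find y ≤ K.find x + 1 :=
  mem_of_superset (mem_interior_iff_mem_nhds.mp (K.subset_interior_succ _ (K.mem_find x)))
    fun _ hy ↦ K.mem_iff_find_le.mp hy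

theorem exists_eventually_comp_find_le (K : CompactExhaustion X) (d : ℕ → ℝ) (x : X) :
    ∃ c, ∀ᶠ y in 𝓝 x, d (K.find y) ≤ c := by
  obtain ⟨c, hc⟩ := ((finite_Iic (K.find x + 1)).image d).bddAbove
  exact ⟨c, (K.eventually_find_le_succ x).mono fun y hy ↦ hc ⟨_, hy, rfl⟩⟩

theorem exists_le_add_comp_find (K : CompactExhaustion X) (L : CompactExhaustion Y)
    {f : X × Y → ℝ} (hf : Continuous f) :
    ∃ d : ℕ → ℝ, ∀ x y, f (x, y) ≤ d (K.find x) + d (L.find y) := by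
  choose B hB using fun k ↦
    ((K.isCompact k).prod (L.isCompact k)).bddAbove_image hf.continuousOn
  refine ⟨fun k ↦ max (B k) 0, fun x y ↦ ?_⟩
  have hxy : (x, y) ∈ K (max (K.find x) (L.find y)) ×ˢ L (max (K.find x) (L.find y)) :=
    ⟨K.subset (le_max_left _ _) (K.mem_find x), L.subset (le_max_right _ _) (L.mem_find y)⟩
  have hfB : f (x, y) ≤ max (B (max (K.find x) (L.find y))) 0 :=
    (hB _ ⟨_, hxy, rfl⟩).trans (le_max_left _ _)
  rcases max_choice (K.find x) (L.find y) with hk | hk <;> rw [hk] at hfB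
  · linarith [le_max_right (B (L.find y)) 0]
  · linarith [le_max_right (B (K.find x)) 0]

end CompactExhaustion

theorem exists_contMDiff_ge_of_eventually_le {E H M : Type*} [NormedAddCommGroup E]
    [NormedSpace ℝ E] [FiniteDimensional ℝ E] [TopologicalSpace H] (I : ModelWithCorners ℝ E H)
    [TopologicalSpace M] [ChartedSpace H M] [IsManifold I ∞ M] [SigmaCompactSpace M] [T2Space M]
    {n : ℕ∞} {h : M → ℝ} (hh : ∀ x, ∃ c, ∀ᶠ y in 𝓝 x, h y ≤ c) :
    ∃ g : M → ℝ, ContMDiff I 𝓘(ℝ, ℝ) n g ∧ ∀ x, h x ≤ g x := by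
  obtain ⟨g, hg⟩ :=
    exists_contMDiffMap_forall_mem_convex_of_local_const I (n := n) (t := fun x ↦ Ici (h x))
      (fun _ ↦ convex_Ici _) hh
  exact ⟨g, g.contMDiff, hg⟩

/-- Let `M` and `N` be finite-dimensional smooth real manifolds without
boundary (Hausdorff and second countable). Then split functions are cofinal among smooth
functions on `M × N`: for every smooth `f : M × N → ℝ` there are smooth `f₁ : M → ℝ` and
`f₂ : N → ℝ` with `f (x, y) ≤ f₁ x + f₂ y` for all `x, y`. -/
theorem split_functions_cofinal
    {m n : ℕ}
    {M : Type*} [TopologicalSpace M] [ChartedSpace (EuclideanSpace ℝ (Fin m)) M]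
    [IsManifold (𝓡 m) (⊤ : ℕ∞) M] [T2Space M] [SecondCountableTopology M]
    {N : Type*} [TopologicalSpace N] [ChartedSpace (EuclideanSpace ℝ (Fin n)) N]
    [IsManifold (𝓡 n) (⊤ : ℕ∞) N] [T2Space N] [SecondCountableTopology N]
    (f : M × N → ℝ) (hf : ContMDiff ((𝓡 m).prod (𝓡 n)) 𝓘(ℝ, ℝ) (⊤ : ℕ∞) f) :
    ∃ (f₁ : M → ℝ) (f₂ : N → ℝ),
      ContMDiff (𝓡 m) 𝓘(ℝ, ℝ) (⊤ : ℕ∞) f₁ ∧ ContMDiff (𝓡 n) 𝓘(ℝ, ℝ) (⊤ : ℕ∞) f₂ ∧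
      ∀ (x : M) (y : N), f (x, y) ≤ f₁ x + f₂ y := by
  have := ChartedSpace.locallyCompactSpace (EuclideanSpace ℝ (Fin m)) M
  have := ChartedSpace.locallyCompactSpace (EuclideanSpace ℝ (Fin n)) N
  let K := CompactExhaustion.choice M
  let L := CompactExhaustion.choice N
  obtain ⟨d, hd⟩ := K.exists_le_add_comp_find L hf.continuous
  obtain ⟨f₁, hf₁, hle₁⟩ :=
    exists_contMDiff_ge_of_eventually_le (𝓡 m) (n := ⊤) (K.exists_eventually_comp_find_le d)
  obtain ⟨f₂, hf₂, hle₂⟩ :=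
    exists_contMDiff_ge_of_eventually_le (𝓡 n) (n := ⊤) (L.exists_eventually_comp_find_le d)
  exact ⟨f₁, f₂, hf₁, hf₂, fun x y ↦ (hd x y).trans (add_le_add (hle₁ x) (hle₂ y))⟩
end

section
/- Let X be a nonempty proper metric space (every closed ball of X is compact). Let H : X → ℝ be a function that is bounded below and tends to +∞ along the cocompact filter of X (i.e., for every c ∈ ℝ there is a compact set K ⊆ X with H(x) > c for all x ∉ K). Then there exists a function G : X → ℝ such that G is 1-Lipschitz, G(x) ≤ H(x) for all x ∈ X, and G tends to +∞ along the cocompact filter of X. -/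
/-- Let `X` be a nonempty proper metric space. Let `H : X → ℝ` be bounded
below and tend to `+∞` along the cocompact filter of `X`. Then there is a `1`-Lipschitz
function `G : X → ℝ` with `G ≤ H` pointwise which also tends to `+∞` along the cocompact
filter of `X`. -/
theorem lipschitz_exhaustion_minorant
    {X : Type*} [MetricSpace X] [ProperSpace X] [Nonempty X]
    (H : X → ℝ) (hbdd : BddBelow (Set.range H))
    (hexh : Filter.Tendsto H (Filter.cocompact X) Filter.atTop) :
    ∃ G : X → ℝ, LipschitzWith 1 G ∧ (∀ x, G x ≤ H x) ∧
      Filter.Tendsto G (Filter.cocompact X) Filter.atTop := by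
  obtain ⟨m, hm⟩ := hbdd
  have hmH : ∀ y, m ≤ H y := fun y => hm (Set.mem_range_self y)
  set G : X → ℝ := fun x => sInf (Set.range fun y => H y + dist x y) with hG
  have hne : ∀ x : X, (Set.range fun y => H y + dist x y).Nonempty :=
    fun x => Set.range_nonempty _
  have hbd : ∀ x : X, BddBelow (Set.range fun y => H y + dist x y) := by
    intro x
    refine ⟨m, ?_⟩
    rintro _ ⟨y, rfl⟩
    have := dist_nonneg (x := x) (y := y)
    have := hmH y
    dsimp only
    linarith
  have hle : ∀ x, G x ≤ H x := by
    intro x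
    have : G x ≤ H x + dist x x := csInf_le (hbd x) ⟨x, rfl⟩
    simpa using this
  have key : ∀ x x' : X, G x - dist x x' ≤ G x' := by
    intro x x'
    apply le_csInf (hne x')
    rintro _ ⟨y, rfl⟩
    have h1 : G x ≤ H y + dist x y := csInf_le (hbd x) ⟨y, rfl⟩
    have h2 := dist_triangle x x' y
    dsimp only
    linarith
  have hlip : LipschitzWith 1 G := by
    apply LipschitzWith.of_dist_le_mul
    intro x y
    rw [Real.dist_eq, abs_sub_le_iff]
    constructor
    · have := key x y
      have := dist_comm x y
      push_cast
      linarith [key x y]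
    · push_cast
      linarith [key y x, dist_comm x y]
  refine ⟨G, hlip, hle, ?_⟩
  rw [Filter.tendsto_atTop]
  intro c
  have hc : ∀ᶠ x in Filter.cocompact X, c ≤ H x :=
    hexh.eventually (Filter.eventually_ge_atTop c)
  rw [Filter.hasBasis_cocompact.eventually_iff] at hc
  obtain ⟨K, hK, hKc⟩ := hc
  obtain ⟨x₀⟩ := ‹Nonempty X›
  obtain ⟨r, hr⟩ := hK.isBounded.subset_closedBall x₀
  rw [Filter.hasBasis_cocompact.eventually_iff]
  refine ⟨Metric.closedBall x₀ (r + (c - m)), isCompact_closedBall _ _, fun x hx => ?_⟩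
  have hx' : r + (c - m) < dist x x₀ := by
    simpa [Metric.mem_closedBall, not_le] using hx
  apply le_csInf (hne x)
  rintro _ ⟨y, rfl⟩
  dsimp only
  by_cases hy : y ∈ K
  · have hyr : dist y x₀ ≤ r := hr hy
    have h3 := dist_triangle x y x₀
    have := hmH y
    linarith
  · have := hKc hy
    have := dist_nonneg (x := x) (y := y)
    linarith
end

section
/- Let V be a real vector space and let ω : V × V → ℝ be a bilinear form that is alternating (ω(v, v) = 0 for all v) and nondegenerate (if ω(v, w) = 0 for all w then v = 0). Let α, β : V → ℝ be linear functionals and suppose there exist vectors X_α, X_β ∈ V with ω(X_α, w) = α(w) and ω(X_β, w) = β(w) for all w ∈ V, and suppose α(X_β) = 0. Let c > 0 be a real number. Define the bilinear form Ω on ℝ × ℝ × V by Ω((s, t, w), (s', t', w')) := c·(s·t' − t·s') + ω(w, w') + α(w)·t' − α(w')·t + β(w)·s' − β(w')·s. Then Ω is alternating and nondegenerate. -/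
/-- The bilinear form `Ω` on `ℝ × ℝ × V` associated with a bilinear form `ω` on `V`, linear
functionals `α, β : V → ℝ` and a constant `c`:
`Ω((s,t,w),(s',t',w')) = c (s t' − t s') + ω(w,w') + α(w) t' − α(w') t + β(w) s' − β(w') s`. -/
noncomputable def OmegaForm {V : Type*} [AddCommGroup V] [Module ℝ V]
    (ω : V →ₗ[ℝ] V →ₗ[ℝ] ℝ) (α β : V →ₗ[ℝ] ℝ) (c : ℝ) :
    (ℝ × ℝ × V) →ₗ[ℝ] (ℝ × ℝ × V) →ₗ[ℝ] ℝ :=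
  LinearMap.mk₂ ℝ
    (fun p q => c * (p.1 * q.2.1 - q.1 * p.2.1) + ω p.2.2 q.2.2
      + α p.2.2 * q.2.1 - α q.2.2 * p.2.1 + β p.2.2 * q.1 - β q.2.2 * p.1)
    (by
      intro p p' q
      simp only [Prod.fst_add, Prod.snd_add, map_add, LinearMap.add_apply]
      ring)
    (by
      intro a p q
      simp only [Prod.smul_fst, Prod.smul_snd, map_smul, LinearMap.smul_apply,
        smul_eq_mul]
      ring)
    (by
      intro p q q'
      simp only [Prod.fst_add, Prod.snd_add, map_add, LinearMap.add_apply]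
      ring)
    (by
      intro a p q
      simp only [Prod.smul_fst, Prod.smul_snd, map_smul, LinearMap.smul_apply,
        smul_eq_mul]
      ring)

/-- Let `ω` be an alternating nondegenerate bilinear form on a real vector
space `V`, let `α, β` be linear functionals with Hamiltonian vectors `X_α, X_β`
(`ω(X_α, ·) = α`, `ω(X_β, ·) = β`) satisfying `α(X_β) = 0`, and let `c > 0`. Then the
bilinear form `Ω` on `ℝ × ℝ × V` defined by
`Ω((s,t,w),(s',t',w')) = c (s t' − t s') + ω(w,w') + α(w) t' − α(w') t + β(w) s' − β(w') s`
is alternating and nondegenerate. -/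
theorem OmegaForm_alternating_nondegenerate
    {V : Type*} [AddCommGroup V] [Module ℝ V]
    (ω : V →ₗ[ℝ] V →ₗ[ℝ] ℝ)
    (halt : ∀ v, ω v v = 0)
    (hnd : ∀ v, (∀ w, ω v w = 0) → v = 0)
    (α β : V →ₗ[ℝ] ℝ) (Xα Xβ : V)
    (hXα : ∀ w, ω Xα w = α w) (hXβ : ∀ w, ω Xβ w = β w)
    (hαβ : α Xβ = 0)
    (c : ℝ) (hc : 0 < c) :
    (∀ p : ℝ × ℝ × V, OmegaForm ω α β c p p = 0) ∧
    (∀ p : ℝ × ℝ × V, (∀ q : ℝ × ℝ × V, OmegaForm ω α β c p q = 0) → p = 0) := by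
  
  have hskew : ∀ u v : V, ω u v = - ω v u := by
    intro u v
    have h := halt (u + v)
    simp only [map_add, LinearMap.add_apply, halt u, halt v] at h
    linarith
  constructor
  · intro p
    simp only [OmegaForm, LinearMap.mk₂_apply, halt]
    ring
  · rintro ⟨s, t, w⟩ hp
    simp only [OmegaForm, LinearMap.mk₂_apply] at hp
    have h1 := hp (1, 0, 0)
    have h2 := hp (0, 1, 0)
    simp only [map_zero, mul_zero, mul_one, zero_mul, one_mul, add_zero, sub_zero,
      zero_sub, mul_zero] at h1 h2
    -- h1 : -c*t + β w = 0 (roughly), h2 : c*s + α w = 0 (roughly)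
    have hw : w = t • Xα + s • Xβ := by
      have key : ∀ w' : V, ω (w - t • Xα - s • Xβ) w' = 0 := by
        intro w'
        have h3 := hp (0, 0, w')
        simp only [map_zero, mul_zero, zero_mul, mul_one, add_zero, sub_zero] at h3
        simp only [map_sub, map_smul, LinearMap.sub_apply, LinearMap.smul_apply,
          smul_eq_mul, hXα, hXβ]
        linarith
      have := hnd _ key
      have : w - t • Xα - s • Xβ = 0 := this
      linear_combination (norm := module) this
    have hαXα : α Xα = 0 := by rw [← hXα]; exact halt Xα
    have hβXβ : β Xβ = 0 := by rw [← hXβ]; exact halt Xβ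
    have hβXα : β Xα = 0 := by
      rw [← hXβ, hskew, hXα, hαβ, neg_zero]
    have hαw : α w = 0 := by
      rw [hw]; simp [hαXα, hαβ]
    have hβw : β w = 0 := by
      rw [hw]; simp [hβXα, hβXβ]
    rw [hβw] at h1
    rw [hαw] at h2
    have ht : t = 0 := by nlinarith
    have hs : s = 0 := by nlinarith
    have hw0 : w = 0 := by rw [hw, ht, hs]; simp
    simp [hs, ht, hw0, Prod.ext_iff]
end

section
/- Let R be a ring. Let (C_i, d_i) and (B_i, d'_i), i ∈ ℕ, be two sequences of differential R-modules with chain maps κ_i : C_i → C_{i+1} and κ'_i : B_i → B_{i+1}, and telescopes (T_C, D) and (T_B, D'). Suppose given chain maps f_i : C_i → B_i (f_i ∘ d_i = d'_i ∘ f_i) and R-linear homotopies j_i : C_i → B_{i+1} satisfying f_{i+1} ∘ κ_i − κ'_i ∘ f_i = d'_{i+1} ∘ j_i + j_i ∘ d_i for all i. Define φ : T_C → T_B by φ(a, b) := (f(a) + ĵ(b), f(b)), where f acts componentwise and ĵ : ⊕_i C_i → ⊕_i B_i is defined by (ĵ b)_0 = 0 and (ĵ b)_{i+1} = j_i(b_i).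 Then φ is a chain map of telescopes: φ ∘ D = D' ∘ φ. -/
open DirectSum

section Telescope

variable {R : Type*} [Ring R]
variable (C : ℕ → Type*) [∀ i, AddCommGroup (C i)] [∀ i, Module R (C i)]

/-- Componentwise differential on the direct sum. -/
def dSum (d : ∀ i, C i →ₗ[R] C i) : (⨁ i, C i) →ₗ[R] ⨁ i, C i :=
  DirectSum.toModule R ℕ _ (fun i => (DirectSum.lof R ℕ C (i)).comp (d i))

/-- Shift map of the telescope: sends the summand `C i` to `C (i+1)` via `κ i`. -/
def shiftSum (κ : ∀ i, C i →ₗ[R] C (i + 1)) : (⨁ i, C i) →ₗ[R] ⨁ i, C i :=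
  DirectSum.toModule R ℕ _ (fun i => (DirectSum.lof R ℕ C (i + 1)).comp (κ i))

/-- The connecting map `c` of the telescope: `(c b)₀ = −b₀`,
`(c b)_{i+1} = κ_i (b_i) − b_{i+1}`. -/
def conn (κ : ∀ i, C i →ₗ[R] C (i + 1)) : (⨁ i, C i) →ₗ[R] ⨁ i, C i :=
  shiftSum C κ - LinearMap.id

/-- The telescope differential `D (a, b) = (d a + c b, −d b)`. -/
def Dtel (d : ∀ i, C i →ₗ[R] C i) (κ : ∀ i, C i →ₗ[R] C (i + 1)) :
    ((⨁ i, C i) × ⨁ i, C i) →ₗ[R] (⨁ i, C i) × ⨁ i, C i :=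
  LinearMap.prod
    ((dSum C d).comp (LinearMap.fst R _ _) + (conn C κ).comp (LinearMap.snd R _ _))
    (-(dSum C d).comp (LinearMap.snd R _ _))

variable (B : ℕ → Type*) [∀ i, AddCommGroup (B i)] [∀ i, Module R (B i)]

/-- The componentwise map `⊕ C i → ⊕ B i` induced by maps `f i : C i → B i`. -/
def fSum (f : ∀ i, C i →ₗ[R] B i) : (⨁ i, C i) →ₗ[R] ⨁ i, B i :=
  DirectSum.toModule R ℕ _ (fun i => (DirectSum.lof R ℕ B i).comp (f i))

/-- The map `ĵ : ⊕ C i → ⊕ B i` with `(ĵ b)₀ = 0` and `(ĵ b)_{i+1} = j_i (b_i)`. -/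
def jSum (j : ∀ i, C i →ₗ[R] B (i + 1)) : (⨁ i, C i) →ₗ[R] ⨁ i, B i :=
  DirectSum.toModule R ℕ _ (fun i => (DirectSum.lof R ℕ B (i + 1)).comp (j i))

/-- The telescope map `φ (a, b) = (f a + ĵ b, f b)`. -/
def phiTel (f : ∀ i, C i →ₗ[R] B i) (j : ∀ i, C i →ₗ[R] B (i + 1)) :
    ((⨁ i, C i) × ⨁ i, C i) →ₗ[R] (⨁ i, B i) × ⨁ i, B i :=
  LinearMap.prod
    ((fSum C B f).comp (LinearMap.fst R _ _) + (jSum C B j).comp (LinearMap.snd R _ _))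
    ((fSum C B f).comp (LinearMap.snd R _ _))

/-- The mapping-cone computation: `(a, b) ↦ (F a + J b, F b)` intertwines the differentials
`(a, b) ↦ (d a + c b, -d b)`. -/
theorem prod_triangular_comp_eq_comp {M N : Type*} [AddCommGroup M] [Module R M]
    [AddCommGroup N] [Module R N] (dM cM : M →ₗ[R] M) (dN cN : N →ₗ[R] N) (F J : M →ₗ[R] N)
    (hF : F ∘ₗ dM = dN ∘ₗ F) (hJ : F ∘ₗ cM - cN ∘ₗ F = dN ∘ₗ J + J ∘ₗ dM) :
    (F ∘ₗ LinearMap.fst R M M + J ∘ₗ LinearMap.snd R M M).prod (F ∘ₗ LinearMap.snd R M M) ∘ₗ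
        (dM ∘ₗ LinearMap.fst R M M + cM ∘ₗ LinearMap.snd R M M).prod
          (-dM ∘ₗ LinearMap.snd R M M) =
      (dN ∘ₗ LinearMap.fst R N N + cN ∘ₗ LinearMap.snd R N N).prod
          (-dN ∘ₗ LinearMap.snd R N N) ∘ₗ
        (F ∘ₗ LinearMap.fst R M M + J ∘ₗ LinearMap.snd R M M).prod (F ∘ₗ LinearMap.snd R M M) := by
  have hF' (x : M) : F (dM x) = dN (F x) := LinearMap.congr_fun hF x
  have hJ' (x : M) : F (cM x) = dN (J x) + J (dM x) + cN (F x) :=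
    sub_eq_iff_eq_add.mp (LinearMap.congr_fun hJ x)
  refine LinearMap.ext fun ⟨a, b⟩ => Prod.ext ?_ ?_
  · simp only [LinearMap.comp_apply, LinearMap.prod_apply, Function.prod, LinearMap.add_apply,
      LinearMap.neg_apply, LinearMap.fst_apply, LinearMap.snd_apply, map_add, map_neg, hF', hJ']
    abel
  · simp only [LinearMap.comp_apply, LinearMap.prod_apply, Function.prod, LinearMap.neg_apply,
      LinearMap.snd_apply, map_neg, hF']

section Componentwise

variable {C B}

@[simp]
theorem dSum_lof (d : ∀ i, C i →ₗ[R] C i) (i : ℕ) (x : C i) :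
    dSum C d (lof R ℕ C i x) = lof R ℕ C i (d i x) :=
  toModule_lof R i x

@[simp]
theorem shiftSum_lof (κ : ∀ i, C i →ₗ[R] C (i + 1)) (i : ℕ) (x : C i) :
    shiftSum C κ (lof R ℕ C i x) = lof R ℕ C (i + 1) (κ i x) :=
  toModule_lof R i x

@[simp]
theorem fSum_lof (f : ∀ i, C i →ₗ[R] B i) (i : ℕ) (x : C i) :
    fSum C B f (lof R ℕ C i x) = lof R ℕ B i (f i x) :=
  toModule_lof R i x

@[simp]
theorem jSum_lof (j : ∀ i, C i →ₗ[R] B (i + 1)) (i : ℕ) (x : C i) :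
    jSum C B j (lof R ℕ C i x) = lof R ℕ B (i + 1) (j i x) :=
  toModule_lof R i x

theorem fSum_comp_dSum {d : ∀ i, C i →ₗ[R] C i} {d' : ∀ i, B i →ₗ[R] B i}
    {f : ∀ i, C i →ₗ[R] B i} (hf : ∀ i, f i ∘ₗ d i = d' i ∘ₗ f i) :
    fSum C B f ∘ₗ dSum C d = dSum B d' ∘ₗ fSum C B f := by
  refine DirectSum.linearMap_ext R fun i => LinearMap.ext fun x => ?_
  simpa using congrArg (lof R ℕ B i) (LinearMap.congr_fun (hf i) x)

theorem fSum_comp_shiftSum_sub {d : ∀ i, C i →ₗ[R] C i} {d' : ∀ i, B i →ₗ[R] B i}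
    {κ : ∀ i, C i →ₗ[R] C (i + 1)} {κ' : ∀ i, B i →ₗ[R] B (i + 1)} {f : ∀ i, C i →ₗ[R] B i}
    {j : ∀ i, C i →ₗ[R] B (i + 1)}
    (hj : ∀ i, f (i + 1) ∘ₗ κ i - κ' i ∘ₗ f i = d' (i + 1) ∘ₗ j i + j i ∘ₗ d i) :
    fSum C B f ∘ₗ shiftSum C κ - shiftSum B κ' ∘ₗ fSum C B f =
      dSum B d' ∘ₗ jSum C B j + jSum C B j ∘ₗ dSum C d := by
  refine DirectSum.linearMap_ext R fun i => LinearMap.ext fun x => ?_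
  simpa [← map_sub, ← map_add] using congrArg (lof R ℕ B (i + 1)) (LinearMap.congr_fun (hj i) x)

theorem fSum_comp_conn_sub {d : ∀ i, C i →ₗ[R] C i} {d' : ∀ i, B i →ₗ[R] B i}
    {κ : ∀ i, C i →ₗ[R] C (i + 1)} {κ' : ∀ i, B i →ₗ[R] B (i + 1)} {f : ∀ i, C i →ₗ[R] B i}
    {j : ∀ i, C i →ₗ[R] B (i + 1)}
    (hj : ∀ i, f (i + 1) ∘ₗ κ i - κ' i ∘ₗ f i = d' (i + 1) ∘ₗ j i + j i ∘ₗ d i) :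
    fSum C B f ∘ₗ conn C κ - conn B κ' ∘ₗ fSum C B f =
      dSum B d' ∘ₗ jSum C B j + jSum C B j ∘ₗ dSum C d := by
  rw [← fSum_comp_shiftSum_sub hj, conn, conn, LinearMap.comp_sub, LinearMap.sub_comp]
  simp only [LinearMap.comp_id, LinearMap.id_comp, sub_sub_sub_cancel_right]

end Componentwise

theorem phiTel_chain_map
    (d : ∀ i, C i →ₗ[R] C i)
    (κ : ∀ i, C i →ₗ[R] C (i + 1))
    (d' : ∀ i, B i →ₗ[R] B i)
    (κ' : ∀ i, B i →ₗ[R] B (i + 1))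
    (f : ∀ i, C i →ₗ[R] B i)
    (hf : ∀ i, (f i) ∘ₗ (d i) = (d' i) ∘ₗ (f i))
    (j : ∀ i, C i →ₗ[R] B (i + 1))
    (hj : ∀ i, (f (i + 1)) ∘ₗ (κ i) - (κ' i) ∘ₗ (f i) =
        (d' (i + 1)) ∘ₗ (j i) + (j i) ∘ₗ (d i)) :
    (phiTel C B f j) ∘ₗ (Dtel C d κ) = (Dtel B d' κ') ∘ₗ (phiTel C B f j) :=
  prod_triangular_comp_eq_comp _ _ _ _ _ _ (fSum_comp_dSum hf) (fSum_comp_conn_sub hj)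

end Telescope
end

section
/- Let m : ℝ → ℝ be a nondecreasing function that is bounded below and tends to +∞ at +∞. Then for every ε > 0 there exists an infinitely differentiable function f : ℝ → ℝ such that f(x) ≤ m(x) for all x ∈ ℝ, 0 ≤ f'(x) ≤ ε for all x ∈ ℝ, and f tends to +∞ at +∞. -/
open Filter Set Metric Complex
open scoped Topology

noncomputable def erSig (u : ℝ) : ℝ := Real.exp (-Real.exp (-u))

noncomputable def erSig' (u : ℝ) : ℝ := Real.exp (-u) * erSig u

noncomputable def ecSig (z : ℂ) : ℂ := Complex.exp (-Complex.exp (-z))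

lemma ecSig_ofReal (u : ℝ) : ecSig (u : ℂ) = ((erSig u : ℝ) : ℂ) := by
  simp only [ecSig, erSig]
  push_cast
  rfl

lemma two_mul_le_exp (t : ℝ) : 2 * t ≤ Real.exp t := by
  have h1 := Real.add_one_le_exp (t / 2)
  have h2 : Real.exp t = Real.exp (t / 2) * Real.exp (t / 2) := by
    rw [← Real.exp_add]; ring_nf
  nlinarith [Real.exp_nonneg (t / 2), sq_nonneg (t / 2 - 1)]

lemma erSig_pos (u : ℝ) : 0 < erSig u := Real.exp_pos _

lemma erSig_le_one (u : ℝ) : erSig u ≤ 1 :=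
  Real.exp_le_one_iff.2 (neg_nonpos.2 (Real.exp_nonneg _))

lemma erSig_mono : Monotone erSig := by
  intro u v huv
  exact Real.exp_le_exp.2 (neg_le_neg (Real.exp_le_exp.2 (neg_le_neg huv)))

lemma erSig_le_exp (u : ℝ) : erSig u ≤ Real.exp u := by
  apply Real.exp_le_exp.2
  have := Real.add_one_le_exp (-u)
  linarith

lemma erSig'_nonneg (u : ℝ) : 0 ≤ erSig' u :=
  mul_nonneg (Real.exp_nonneg _) (erSig_pos u).le

lemma erSig'_le_exp_neg_abs (u : ℝ) : erSig' u ≤ Real.exp (-|u|) := by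
  rcases le_total 0 u with h | h
  · rw [_root_.abs_of_nonneg h]
    calc erSig' u ≤ Real.exp (-u) * 1 :=
          mul_le_mul_of_nonneg_left (erSig_le_one u) (Real.exp_nonneg _)
      _ = Real.exp (-u) := mul_one _
  · rw [_root_.abs_of_nonpos h]
    rw [erSig', erSig, ← Real.exp_add, neg_neg]
    apply Real.exp_le_exp.2
    have := two_mul_le_exp (-u)
    linarith

lemma hasDerivAt_ecSig (z : ℂ) :
    HasDerivAt ecSig (Complex.exp (-z) * ecSig z) z := by
  have h1 : HasDerivAt (fun w : ℂ => -w) (-1) z := (hasDerivAt_id z).neg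
  have h2 := h1.cexp
  have h3 := h2.neg
  have h4 := h3.cexp
  simp only [mul_neg, mul_one, neg_neg] at h4
  convert h4 using 1
  · rfl
  · rfl
  simp [ecSig]
  ring

lemma norm_ecSig_le {z : ℂ} (him : |z.im| ≤ 1/4) :
    ‖ecSig z‖ ≤ Real.exp (-(1/2 * Real.exp (-z.re))) := by
  rw [ecSig, Complex.norm_exp]
  apply Real.exp_le_exp.2
  have hre : (-Complex.exp (-z)).re = -(Real.exp (-z.re) * Real.cos z.im) := by
    rw [Complex.neg_re, Complex.exp_re]
    simp [Real.cos_neg]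
  rw [hre]
  have hcos : 1/2 ≤ Real.cos z.im := by
    have := Real.one_sub_sq_div_two_le_cos (x := z.im)
    have h2 : z.im ^ 2 ≤ (1/4)^2 := by
      rw [← _root_.sq_abs]
      exact pow_le_pow_left₀ (abs_nonneg _) him 2
    nlinarith
  nlinarith [Real.exp_nonneg (-z.re)]

lemma a_step {a : ℕ → ℝ} (ha : ∀ n, a n + 2 ≤ a (n + 1)) (n j : ℕ) :
    a n + 2 * j ≤ a (n + j) := by
  induction j with
  | zero => simp
  | succ j ih =>
      have := ha (n + j)
      push_cast
      push_cast at ih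
      have : a n + 2 * j + 2 ≤ a (n + j + 1) := by linarith
      calc a n + 2 * (j + 1) = a n + 2 * j + 2 := by ring
        _ ≤ a (n + (j + 1)) := by rw [show n + (j+1) = n + j + 1 by ring]; exact this

lemma gap_sum {a : ℕ → ℝ} (ha : ∀ n, a n + 2 ≤ a (n + 1)) {x : ℝ} {k : ℕ}
    (hk : x < a k) (hk' : ∀ n, n < k → a n ≤ x) :
    Summable (fun n => Real.exp (-|x - a n|)) ∧
      (∑' n, Real.exp (-|x - a n|)) ≤ 4 := by
  set r : ℝ := Real.exp (-2) with hrdef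
  have hr0 : 0 ≤ r := Real.exp_nonneg _
  have hr1 : r < 1 := Real.exp_lt_one_iff.2 (by norm_num)
  have hrpow : ∀ j : ℕ, r ^ j = Real.exp (-(2 * j)) := by
    intro j
    rw [hrdef, ← Real.exp_nat_mul]
    ring_nf
  have hrhalf : r ≤ 1/2 := by
    rw [hrdef, Real.exp_neg]
    rw [inv_le_comm₀ (Real.exp_pos 2) (by norm_num)]
    have := Real.add_one_le_exp (2:ℝ)
    linarith
  set g : ℕ → ℝ := fun n => if n < k then r ^ (k - 1 - n) else r ^ (n - k) with hgdef
  have hterm : ∀ n, Real.exp (-|x - a n|) ≤ g n := by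
    intro n
    rcases lt_or_ge n k with h | h
    · have hk1 : n ≤ k - 1 := Nat.le_sub_one_of_lt h
      have h2 : a n + 2 * ((k - 1 - n : ℕ) : ℝ) ≤ a (k - 1) := by
        have := a_step ha n (k - 1 - n)
        rwa [show n + (k - 1 - n) = k - 1 by omega] at this
      have h3 : a (k - 1) ≤ x := hk' (k - 1) (by omega)
      have habs : |x - a n| ≥ 2 * ((k - 1 - n : ℕ) : ℝ) := by
        rw [_root_.abs_of_nonneg (by linarith)]
        linarith
      rw [hgdef]
      simp only [h, if_true]
      rw [hrpow]
      exact Real.exp_le_exp.2 (by linarith)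
    · have h2 : a k + 2 * ((n - k : ℕ) : ℝ) ≤ a n := by
        have := a_step ha k (n - k)
        rwa [show k + (n - k) = n by omega] at this
      have hxn : x - a n ≤ -(2 * ((n - k : ℕ) : ℝ)) := by linarith
      have habs : 2 * ((n - k : ℕ) : ℝ) ≤ |x - a n| := by
        rw [_root_.abs_of_nonpos (by linarith [Nat.cast_nonneg (α := ℝ) (n - k)])]
        linarith
      rw [hgdef]
      simp only [not_lt.2 h, if_false]
      rw [hrpow]
      exact Real.exp_le_exp.2 (by linarith)
  have hgnn : ∀ n, 0 ≤ g n := by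
    intro n
    rw [hgdef]
    dsimp only
    split <;> positivity
  have hgsum : Summable g := by
    rw [← summable_nat_add_iff k]
    have : (fun n => g (n + k)) = fun n => r ^ n := by
      funext n
      rw [hgdef]
      simp only [Nat.add_sub_cancel, not_lt.2 (Nat.le_add_left k n), if_false]
    rw [this]
    exact summable_geometric_of_lt_one hr0 hr1
  have hsum : Summable (fun n => Real.exp (-|x - a n|)) :=
    Summable.of_nonneg_of_le (fun n => Real.exp_nonneg _) hterm hgsum
  refine ⟨hsum, ?_⟩
  have h1 : (∑' n, Real.exp (-|x - a n|)) ≤ ∑' n, g n := Summable.tsum_le_tsum hterm hsum hgsum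
  have hgeo : Summable (fun n : ℕ => r ^ n) := summable_geometric_of_lt_one hr0 hr1
  have hinv : (1 - r)⁻¹ ≤ 2 := by
    rw [inv_le_comm₀ (by linarith) (by norm_num)]
    linarith
  have hshift : Summable (fun n => g (n + k)) := (summable_nat_add_iff k).2 hgsum
  have h2 : ∑' n, g n = (∑ n ∈ Finset.range k, g n) + ∑' n, g (n + k) :=
    (hshift.sum_add_tsum_nat_add').symm
  have h3 : ∑' n : ℕ, g (n + k) = (1 - r)⁻¹ := by
    have : (fun n => g (n + k)) = fun n => r ^ n := by
      funext n
      rw [hgdef]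
      simp only [Nat.add_sub_cancel, not_lt.2 (Nat.le_add_left k n), if_false]
    rw [this, tsum_geometric_of_lt_one hr0 hr1]
  have h4 : (∑ n ∈ Finset.range k, g n) ≤ (1 - r)⁻¹ := by
    have he : ∀ n ∈ Finset.range k, g n = r ^ (k - 1 - n) := by
      intro n hn
      rw [hgdef]
      simp [Finset.mem_range.1 hn]
    rw [Finset.sum_congr rfl he, Finset.sum_range_reflect (fun j => r ^ j) k]
    calc (∑ j ∈ Finset.range k, r ^ j) ≤ ∑' j : ℕ, r ^ j :=
          Summable.sum_le_tsum _ (fun j _ => by positivity) hgeo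
      _ = (1 - r)⁻¹ := tsum_geometric_of_lt_one hr0 hr1
  calc (∑' n, Real.exp (-|x - a n|)) ≤ ∑' n, g n := h1
    _ = (∑ n ∈ Finset.range k, g n) + ∑' n, g (n + k) := h2
    _ ≤ (1 - r)⁻¹ + (1 - r)⁻¹ := by rw [h3]; linarith
    _ ≤ 4 := by linarith

/-- Let `m : ℝ → ℝ` be nondecreasing, bounded below, and tending to `+∞`
at `+∞`. Then for every `ε > 0` there is an infinitely differentiable function `f : ℝ → ℝ`
with `f ≤ m` pointwise, `0 ≤ f' ≤ ε` everywhere, and `f` tending to `+∞` at `+∞`. -/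
theorem smooth_slow_proper_minorant
    (m : ℝ → ℝ) (hm : Monotone m) (hbdd : BddBelow (Set.range m))
    (htop : Filter.Tendsto m Filter.atTop Filter.atTop)
    (ε : ℝ) (hε : 0 < ε) :
    ∃ f : ℝ → ℝ, ContDiff ℝ (⊤ : ℕ∞) f ∧ (∀ x, f x ≤ m x) ∧
      (∀ x, 0 ≤ deriv f x ∧ deriv f x ≤ ε) ∧
      Filter.Tendsto f Filter.atTop Filter.atTop := by
  classical
  obtain ⟨B, hB⟩ := hbdd
  have hB' : ∀ x, B ≤ m x := fun x => hB ⟨x, rfl⟩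
  set c₀ : ℝ := ε / 4 with hc₀def
  have hc₀ : 0 < c₀ := by positivity
  -- choice of shift points
  have H : ∀ k : ℕ, ∃ x₀ : ℝ, ∀ x, x₀ ≤ x → B + c₀ * (k + 1) ≤ m x := by
    intro k
    exact eventually_atTop.1 (Filter.tendsto_atTop.1 htop (B + c₀ * (k + 1)))
  choose ξ hξ using H
  set a : ℕ → ℝ := fun n =>
    Nat.rec (max (ξ 0) 0) (fun n p => max (ξ (n + 1)) (p + 2)) n with hadef
  have ha0 : 0 ≤ a 0 := le_max_right _ _
  have hastep : ∀ n, a n + 2 ≤ a (n + 1) := fun n => le_max_right _ _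
  have haξ : ∀ n, ξ n ≤ a n := by
    intro n
    cases n with
    | zero => exact le_max_left _ _
    | succ n => exact le_max_left _ _
  have hma : ∀ (n : ℕ) (x : ℝ), a n ≤ x → B + c₀ * (n + 1) ≤ m x :=
    fun n x hx => hξ n x ((haξ n).trans hx)
  have ha2n : ∀ n : ℕ, 2 * (n : ℝ) ≤ a n := by
    intro n
    have := a_step hastep 0 n
    rw [Nat.zero_add] at this
    linarith
  have hamono : Monotone a := by
    intro i j hij
    have := a_step hastep i (j - i)
    rw [show i + (j - i) = j by omega] at this
    have : a i + 2 * ((j - i : ℕ) : ℝ) ≤ a j := this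
    have hnn : (0:ℝ) ≤ ((j - i : ℕ) : ℝ) := Nat.cast_nonneg _
    linarith
  have hex : ∀ x : ℝ, ∃ n : ℕ, x < a n := by
    intro x
    obtain ⟨n, hn⟩ := exists_nat_gt (x / 2)
    exact ⟨n, by nlinarith [ha2n n]⟩
  -- the complex sum
  set G : ℂ → ℂ := fun z => ∑' n, ecSig (z - a n) with hGdef
  set f : ℝ → ℝ := fun x => (B - 6 * c₀) + c₀ * (G x).re with hfdef
  -- strips
  set S : ℝ → Set ℂ := fun R =>
    Complex.re ⁻¹' Set.Ioo (-R) R ∩ Complex.im ⁻¹' Set.Ioo (-(1/4)) (1/4) with hSdef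
  have hSopen : ∀ R, IsOpen (S R) :=
    fun R => (isOpen_Ioo.preimage Complex.continuous_re).inter
      (isOpen_Ioo.preimage Complex.continuous_im)
  set u : ℝ → ℕ → ℝ := fun R n => Real.exp ((R - 1) / 2) * Real.exp (-1) ^ n with hudef
  have husum : ∀ R, Summable (u R) := fun R =>
    (summable_geometric_of_lt_one (Real.exp_nonneg _)
      (Real.exp_lt_one_iff.2 (by norm_num))).mul_left _
  have hubound : ∀ (R : ℝ) (n : ℕ), ∀ w ∈ S R, ‖ecSig (w - a n)‖ ≤ u R n := by
    intro R n w hw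
    obtain ⟨hwre, hwim⟩ := hw
    simp only [Set.mem_preimage, Set.mem_Ioo] at hwre hwim
    have him : |(w - (a n : ℂ)).im| ≤ 1/4 := by
      rw [Complex.sub_im, Complex.ofReal_im, sub_zero]
      rw [abs_le]
      constructor <;> linarith [hwim.1, hwim.2]
    have h1 := norm_ecSig_le him
    have hre : (w - (a n : ℂ)).re = w.re - a n := by
      rw [Complex.sub_re, Complex.ofReal_re]
    refine h1.trans ?_
    rw [hudef]
    dsimp only
    rw [← Real.exp_nat_mul, ← Real.exp_add]
    apply Real.exp_le_exp.2
    have h2 : a n - w.re + 1 ≤ Real.exp (-(w - (a n : ℂ)).re) := by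
      rw [hre]
      have := Real.add_one_le_exp (a n - w.re)
      rw [show -(w.re - a n) = a n - w.re by ring]
      linarith
    have h3 : 2 * (n:ℝ) - R + 1 ≤ Real.exp (-(w - (a n : ℂ)).re) := by
      have := ha2n n
      have := hwre.2
      linarith
    have : (n:ℝ) * (-1) = -(n:ℝ) := by ring
    rw [this]
    linarith
  have hdiffterm : ∀ (R : ℝ) (n : ℕ),
      DifferentiableOn ℂ (fun w => ecSig (w - (a n : ℂ))) (S R) := by
    intro R n
    have hEc : Differentiable ℂ ecSig := fun z => (hasDerivAt_ecSig z).differentiableAt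
    exact (hEc.comp (differentiable_id.sub_const _)).differentiableOn
  have hGdiff : ∀ R, DifferentiableOn ℂ G (S R) := by
    intro R
    exact differentiableOn_tsum_of_summable_norm (husum R) (hdiffterm R) (hSopen R)
      (fun n w hw => hubound R n w hw)
  have hxS : ∀ x : ℝ, (x : ℂ) ∈ S (|x| + 1) := by
    intro x
    constructor
    · simp only [Set.mem_preimage, Complex.ofReal_re, Set.mem_Ioo]
      constructor
      · have := neg_abs_le x; linarith
      · have := le_abs_self x; linarith
    · simp only [Set.mem_preimage, Complex.ofReal_im, Set.mem_Ioo]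
      norm_num
  -- value sum
  have hsum_val : ∀ x : ℝ, HasSum (fun n => erSig (x - a n)) ((G x).re) := by
    intro x
    have h1 : Summable (fun n => ecSig ((x : ℂ) - a n)) :=
      Summable.of_norm_bounded (husum _)
        (fun n => hubound _ n _ (hxS x))
    have h2 : HasSum (fun n => ecSig ((x : ℂ) - a n)) (G x) := h1.hasSum
    have h3 := RCLike.hasSum_re ℂ h2
    convert h3 using 2 with n
    rw [show ((x : ℂ) - (a n : ℂ)) = ((x - a n : ℝ) : ℂ) by push_cast; ring]
    rw [ecSig_ofReal]
    simp
    rfl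
  -- derivative sum
  have hterm_deriv : ∀ (n : ℕ) (z : ℂ),
      HasDerivAt (fun w => ecSig (w - (a n : ℂ)))
        (Complex.exp (-(z - a n)) * ecSig (z - a n)) z := by
    intro n z
    have h := (hasDerivAt_ecSig (z - a n)).comp z ((hasDerivAt_id z).sub_const (a n : ℂ))
    simpa [Function.comp_def] using h
  have hsum_der : ∀ x : ℝ, HasSum (fun n => erSig' (x - a n)) ((deriv G x).re) := by
    intro x
    have hd := hasSum_deriv_of_summable_norm (husum (|x| + 1)) (hdiffterm (|x| + 1))
      (hSopen _) (fun n w hw => hubound _ n w hw) (hxS x)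
    have heq : (fun n => deriv (fun w => ecSig (w - (a n : ℂ))) (x : ℂ))
        = fun n => ((erSig' (x - a n) : ℝ) : ℂ) := by
      funext n
      rw [(hterm_deriv n x).deriv]
      rw [show ((x : ℂ) - (a n : ℂ)) = ((x - a n : ℝ) : ℂ) by push_cast; ring]
      rw [ecSig_ofReal, erSig']
      push_cast
      try ring
    rw [heq] at hd
    have h3 := RCLike.hasSum_re ℂ hd
    convert h3 using 2 with n
    rfl
    rfl
  -- first index with x < a k
  have hkspec : ∀ x : ℝ, x < a (Nat.find (hex x)) := fun x => Nat.find_spec (hex x)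
  have hkmin : ∀ x : ℝ, ∀ n, n < Nat.find (hex x) → a n ≤ x :=
    fun x n hn => not_lt.1 (Nat.find_min (hex x) hn)
  refine ⟨f, ?_, ?_, ?_, ?_⟩
  · -- analyticity
    rw [contDiff_iff_contDiffAt]
    intro x
    have hGan : AnalyticOnNhd ℂ G (S (|x| + 1)) := (hGdiff _).analyticOnNhd (hSopen _)
    have hGc : ContDiffAt ℂ (⊤ : ℕ∞) G (x : ℂ) := (hGan _ (hxS x)).contDiffAt
    have hre : ContDiffAt ℝ (⊤ : ℕ∞) (fun y : ℝ => (G y).re) x := hGc.real_of_complex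
    exact contDiffAt_const.add (contDiffAt_const.mul hre)
  · -- f ≤ m
    intro x
    set k := Nat.find (hex x) with hkdef
    have hgap := gap_sum hastep (hkspec x) (hkmin x)
    have hb : ∀ n, erSig (x - a n)
        ≤ (if n < k then (1:ℝ) else 0) + Real.exp (-|x - a n|) := by
      intro n
      rcases lt_or_ge n k with h | h
      · simp only [h, if_true]
        have h1 := erSig_le_one (x - a n)
        have h2 := Real.exp_nonneg (-|x - a n|)
        linarith
      · simp only [not_lt.2 h, if_false, zero_add]
        have h1 : x - a n ≤ 0 := by
          have h2 := hamono h
          have h3 := hkspec x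
          simp only [← hkdef] at h3
          linarith
        calc erSig (x - a n) ≤ Real.exp (x - a n) := erSig_le_exp _
          _ = Real.exp (-|x - a n|) := by rw [_root_.abs_of_nonpos h1, neg_neg]
    have hindsum : Summable (fun n => if n < k then (1:ℝ) else 0) := by
      apply summable_of_ne_finset_zero (s := Finset.range k)
      intro n hn
      simp only [Finset.mem_range, not_lt] at hn
      simp [not_lt.2 hn]
    have hsumbound : Summable
        (fun n => (if n < k then (1:ℝ) else 0) + Real.exp (-|x - a n|)) :=
      hindsum.add hgap.1
    have h5 := Summable.tsum_le_tsum hb (hsum_val x).summable hsumbound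
    have h6 : ∑' n, ((if n < k then (1:ℝ) else 0) + Real.exp (-|x - a n|))
        = (∑' n, (if n < k then (1:ℝ) else 0)) + ∑' n, Real.exp (-|x - a n|) :=
      Summable.tsum_add hindsum hgap.1
    have h7 : ∑' n, (if n < k then (1:ℝ) else 0) = (k : ℝ) := by
      rw [tsum_eq_sum (s := Finset.range k) (fun n hn => by
        simp only [Finset.mem_range, not_lt] at hn
        simp [not_lt.2 hn])]
      rw [Finset.sum_congr rfl (fun n hn => if_pos (Finset.mem_range.1 hn))]
      simp
    have h8 : (G x).re ≤ (k : ℝ) + 4 := by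
      rw [← (hsum_val x).tsum_eq]
      rw [h6, h7] at h5
      linarith [hgap.2]
    have h9 : c₀ * (G x).re ≤ c₀ * ((k:ℝ) + 4) :=
      mul_le_mul_of_nonneg_left h8 hc₀.le
    rcases Nat.eq_zero_or_pos k with hk0 | hk1
    · have := hB' x
      rw [hfdef]
      simp only [hk0, Nat.cast_zero] at h9
      dsimp only
      linarith
    · have hkle : a (k - 1) ≤ x := hkmin x (k - 1) (by omega)
      have h10 := hma (k - 1) x hkle
      have hcast : (((k - 1 : ℕ)) : ℝ) + 1 = (k : ℝ) := by
        rw [Nat.cast_sub hk1]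
        push_cast
        ring
      rw [hcast] at h10
      rw [hfdef]
      dsimp only
      linarith
  · -- derivative bounds
    intro x
    have hgd : HasDerivAt G (deriv G x) (x : ℂ) :=
      ((hGdiff (|x| + 1)).differentiableAt
        ((hSopen _).mem_nhds (hxS x))).hasDerivAt
    have h1 := hgd.real_of_complex
    have hfd : HasDerivAt f (c₀ * (deriv G ↑x).re) x :=
      (h1.const_mul c₀).const_add (B - 6 * c₀)
    have hde : deriv f x = c₀ * (deriv G ↑x).re := hfd.deriv
    have hs := hsum_der x
    have htsum : (deriv G (x:ℂ)).re = ∑' n, erSig' (x - a n) := hs.tsum_eq.symm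
    constructor
    · rw [hde]
      apply mul_nonneg hc₀.le
      rw [htsum]
      exact tsum_nonneg (fun n => erSig'_nonneg _)
    · rw [hde]
      have hgap := gap_sum hastep (hkspec x) (hkmin x)
      have h2 : (∑' n, erSig' (x - a n)) ≤ ∑' n, Real.exp (-|x - a n|) :=
        Summable.tsum_le_tsum (fun n => erSig'_le_exp_neg_abs _) hs.summable hgap.1
      have h3 : (deriv G (x:ℂ)).re ≤ 4 := by
        rw [htsum]
        linarith [hgap.2]
      calc c₀ * (deriv G (x:ℂ)).re ≤ c₀ * 4 := mul_le_mul_of_nonneg_left h3 hc₀.le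
        _ = ε := by rw [hc₀def]; ring
  · -- tendsto atTop
    rw [Filter.tendsto_atTop]
    intro b
    obtain ⟨N, hN⟩ := exists_nat_ge ((b - B + 6 * c₀) / (c₀ * Real.exp (-1)))
    rw [eventually_atTop]
    refine ⟨a N, fun x hx => ?_⟩
    have hge : ∀ n ∈ Finset.range (N + 1), Real.exp (-1) ≤ erSig (x - a n) := by
      intro n hn
      have h1 : a n ≤ x := le_trans (hamono (by
        simp only [Finset.mem_range] at hn; omega)) hx
      have h2 : erSig 0 ≤ erSig (x - a n) := erSig_mono (by linarith)
      have h3 : erSig 0 = Real.exp (-1) := by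
        simp [erSig]
      linarith
    have h3 : ((N : ℝ) + 1) * Real.exp (-1) ≤ (G x).re := by
      rw [← (hsum_val x).tsum_eq]
      calc ((N:ℝ) + 1) * Real.exp (-1)
          = ∑ _n ∈ Finset.range (N + 1), Real.exp (-1) := by
            rw [Finset.sum_const, Finset.card_range]
            push_cast
            ring
        _ ≤ ∑ n ∈ Finset.range (N + 1), erSig (x - a n) := Finset.sum_le_sum hge
        _ ≤ ∑' n, erSig (x - a n) :=
            Summable.sum_le_tsum _ (fun n _ => (erSig_pos _).le) (hsum_val x).summable
    have hexp : (0:ℝ) < Real.exp (-1) := Real.exp_pos _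
    have h4 : b - B + 6 * c₀ ≤ (N:ℝ) * (c₀ * Real.exp (-1)) := by
      rw [div_le_iff₀ (by positivity)] at hN
      linarith
    have h5 : c₀ * (((N:ℝ) + 1) * Real.exp (-1)) ≤ c₀ * (G x).re :=
      mul_le_mul_of_nonneg_left h3 hc₀.le
    rw [hfdef]
    dsimp only
    nlinarith
end
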